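/- There is no local-realist value assignment v (assigning to each qubit j ∈ {1,…,5} and each Pauli label P ∈ {X,Y,Z} a value v(j,P) ∈ {+1,−1}) that assigns the values v(ZYXXY) = +1, v(IIXZX) = −1, v(ZZYIY) = +1, v(XZIZX) = +1, v(XYYXI) = +1. In fact, for every such assignment v the product v(ZYXXY)·v(IIXZX)·v(ZZYIY)·v(XZIZX)·v(XYYXI) equals +1, since each Pauli label appears an even number of times on each qubit, whereas the required quantum values have product −1 (a GHZ-type contradiction with local realism). -/
import Mathlib


/-- Labels for single-qubit Pauli operators (including the identity). -/
inductive PauliLabel : Type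
  | I | X | Y | Z
deriving DecidableEq

/-- The local-realist value of a Pauli product `P⁽¹⁾ ⊗ ⋯ ⊗ P⁽ⁿ⁾` under a value
assignment `v`, namely `∏_j v(j, P⁽ʲ⁾)`. -/
def lrValue {n : ℕ} (v : Fin n → PauliLabel → ℤ) (w : Fin n → PauliLabel) : ℤ :=
  ∏ j, v j (w j)

/-- (GHZ-type contradiction.) For every local-realist value assignment
`v`, the product `v(ZYXXY)·v(IIXZX)·v(ZZYIY)·v(XZIZX)·v(XYYXI)` equals `+1` (each Pauli
label appears an even number of times on each qubit); in particular no such assignment can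
realize the quantum values `v(ZYXXY) = +1`, `v(IIXZX) = −1`, `v(ZZYIY) = +1`,
`v(XZIZX) = +1`, `v(XYYXI) = +1`, whose product is `−1`. -/
theorem stmt10 (v : Fin 5 → PauliLabel → ℤ)
    (hvI : ∀ j, v j PauliLabel.I = 1)
    (hv : ∀ j P, P ≠ PauliLabel.I → (v j P = 1 ∨ v j P = -1)) :
    lrValue v ![PauliLabel.Z, PauliLabel.Y, PauliLabel.X, PauliLabel.X, PauliLabel.Y]
      * lrValue v ![PauliLabel.I, PauliLabel.I, PauliLabel.X, PauliLabel.Z, PauliLabel.X]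
      * lrValue v ![PauliLabel.Z, PauliLabel.Z, PauliLabel.Y, PauliLabel.I, PauliLabel.Y]
      * lrValue v ![PauliLabel.X, PauliLabel.Z, PauliLabel.I, PauliLabel.Z, PauliLabel.X]
      * lrValue v ![PauliLabel.X, PauliLabel.Y, PauliLabel.Y, PauliLabel.X, PauliLabel.I]
      = 1 ∧
    ¬(lrValue v ![PauliLabel.Z, PauliLabel.Y, PauliLabel.X, PauliLabel.X, PauliLabel.Y] = 1
      ∧ lrValue v ![PauliLabel.I, PauliLabel.I, PauliLabel.X, PauliLabel.Z, PauliLabel.X] = -1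
      ∧ lrValue v ![PauliLabel.Z, PauliLabel.Z, PauliLabel.Y, PauliLabel.I, PauliLabel.Y] = 1
      ∧ lrValue v ![PauliLabel.X, PauliLabel.Z, PauliLabel.I, PauliLabel.Z, PauliLabel.X] = 1
      ∧ lrValue v ![PauliLabel.X, PauliLabel.Y, PauliLabel.Y, PauliLabel.X, PauliLabel.I] = 1) := by
  have sq : ∀ j P, P ≠ PauliLabel.I → v j P * v j P = 1 := by
    intro j P hP
    rcases hv j P hP with h | h <;> rw [h] <;> ring
  have h0X := sq 0 .X (by simp); have h0Z := sq 0 .Z (by simp)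
  have h1Y := sq 1 .Y (by simp); have h1Z := sq 1 .Z (by simp)
  have h2X := sq 2 .X (by simp); have h2Y := sq 2 .Y (by simp)
  have h3X := sq 3 .X (by simp); have h3Z := sq 3 .Z (by simp)
  have h4X := sq 4 .X (by simp); have h4Y := sq 4 .Y (by simp)
  have key : lrValue v ![PauliLabel.Z, PauliLabel.Y, PauliLabel.X, PauliLabel.X, PauliLabel.Y]
      * lrValue v ![PauliLabel.I, PauliLabel.I, PauliLabel.X, PauliLabel.Z, PauliLabel.X]
      * lrValue v ![PauliLabel.Z, PauliLabel.Z, PauliLabel.Y, PauliLabel.I, PauliLabel.Y]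
      * lrValue v ![PauliLabel.X, PauliLabel.Z, PauliLabel.I, PauliLabel.Z, PauliLabel.X]
      * lrValue v ![PauliLabel.X, PauliLabel.Y, PauliLabel.Y, PauliLabel.X, PauliLabel.I]
      = 1 := by
    simp only [lrValue, Fin.prod_univ_five, Matrix.cons_val_zero, Matrix.cons_val_one,
      Matrix.head_cons, Matrix.cons_val_two, Matrix.tail_cons, Matrix.cons_val_three,
      Matrix.cons_val_four, hvI]
    linear_combination (v 0 PauliLabel.X * v 1 PauliLabel.Y * v 1 PauliLabel.Z * v 2 PauliLabel.X * v 2 PauliLabel.Y * v 3 PauliLabel.X * v 3 PauliLabel.Z * v 4 PauliLabel.X * v 4 PauliLabel.Y)^2 * h0Z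
      + (v 1 PauliLabel.Y * v 1 PauliLabel.Z * v 2 PauliLabel.X * v 2 PauliLabel.Y * v 3 PauliLabel.X * v 3 PauliLabel.Z * v 4 PauliLabel.X * v 4 PauliLabel.Y)^2 * h0X
      + (v 1 PauliLabel.Z * v 2 PauliLabel.X * v 2 PauliLabel.Y * v 3 PauliLabel.X * v 3 PauliLabel.Z * v 4 PauliLabel.X * v 4 PauliLabel.Y)^2 * h1Y
      + (v 2 PauliLabel.X * v 2 PauliLabel.Y * v 3 PauliLabel.X * v 3 PauliLabel.Z * v 4 PauliLabel.X * v 4 PauliLabel.Y)^2 * h1Z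
      + (v 2 PauliLabel.Y * v 3 PauliLabel.X * v 3 PauliLabel.Z * v 4 PauliLabel.X * v 4 PauliLabel.Y)^2 * h2X
      + (v 3 PauliLabel.X * v 3 PauliLabel.Z * v 4 PauliLabel.X * v 4 PauliLabel.Y)^2 * h2Y
      + (v 3 PauliLabel.Z * v 4 PauliLabel.X * v 4 PauliLabel.Y)^2 * h3X
      + (v 4 PauliLabel.X * v 4 PauliLabel.Y)^2 * h3Z
      + (v 4 PauliLabel.Y)^2 * h4X
      + h4Y
  refine ⟨key, ?_⟩
  rintro ⟨e1, e2, e3, e4, e5⟩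
  rw [e1, e2, e3, e4, e5] at key
  norm_num at key
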